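/- Let A be an r×r real symmetric matrix and for each integer k ≥ 0 fix a Cholesky factorization B_k B_k* = 2kI + A². Set P(k,S) = [[√(2k) S^{-1} I, −A],[−A, −√(2k+2) S I]] and F(k) = [[0, B_k],[B_{k+1}, 0]]. Then F(k) F(k)* = [[2kI + A², 0],[0, (2k+2)I + A²]] and P(k,S)* (F(k)*)^{-1} F(k)^{-1} P(k,S) = I_{2r}, where the adjoint of shift operators is (Σ A_n(k) S^n)* = Σ A_n(k−n)* S^{−n}. -/
import Mathlib

open Matrix

/-- Coefficients of the shift operator
`P(k,S) = [[√(2k) S⁻¹ I, −A],[−A, −√(2k+2) S I]]`: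
`Pc (−1) k, Pc 0 k, Pc 1 k` are the coefficients of `S⁻¹, S⁰, S¹`. -/
noncomputable def Pc (r : ℕ) (A : Matrix (Fin r) (Fin r) ℝ) (n k : ℤ) :
    Matrix (Fin r ⊕ Fin r) (Fin r ⊕ Fin r) ℝ :=
  if n = -1 then Matrix.fromBlocks (Real.sqrt (2 * (k : ℝ)) • 1) 0 0 0
  else if n = 0 then Matrix.fromBlocks 0 (-A) (-A) 0
  else if n = 1 then Matrix.fromBlocks 0 0 0 (-(Real.sqrt (2 * (k : ℝ) + 2) • 1))
  else 0

/-- The multiplication operator `F(k) = [[0, B_k],[B_{k+1}, 0]]`. -/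
noncomputable def Fm (r : ℕ) (B : ℤ → Matrix (Fin r) (Fin r) ℝ) (k : ℤ) :
    Matrix (Fin r ⊕ Fin r) (Fin r ⊕ Fin r) ℝ :=
  Matrix.fromBlocks 0 (B k) (B (k + 1)) 0

section Aux

variable {r : ℕ}
local notation "Z" => (0 : Matrix (Fin r) (Fin r) ℝ)

noncomputable def Mm (r : ℕ) (A : Matrix (Fin r) (Fin r) ℝ) (k : ℤ) :
    Matrix (Fin r) (Fin r) ℝ := (2 * (k : ℝ)) • 1 + A * A

lemma Mm_succ (A : Matrix (Fin r) (Fin r) ℝ) (k : ℤ) :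
    Mm r A (k + 1) = (2 * (k : ℝ) + 2) • 1 + A * A := by
  unfold Mm; push_cast; ring_nf

lemma hAM (A : Matrix (Fin r) (Fin r) ℝ) (k : ℤ) :
    A * Mm r A k = Mm r A k * A := by
  unfold Mm
  simp only [mul_add, add_mul, mul_smul_comm, smul_mul_assoc, mul_one, one_mul, mul_assoc]

lemma hcomm (A : Matrix (Fin r) (Fin r) ℝ) (k : ℤ)
    (h : IsUnit (Mm r A k).det) : A * (Mm r A k)⁻¹ = (Mm r A k)⁻¹ * A := by
  set M := Mm r A k
  calc A * M⁻¹ = (M⁻¹ * M) * A * M⁻¹ := by rw [Matrix.nonsing_inv_mul _ h, one_mul]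
    _ = M⁻¹ * (A * M) * M⁻¹ := by rw [mul_assoc M⁻¹ M A, ← hAM]
    _ = M⁻¹ * A * (M * M⁻¹) := by rw [mul_assoc, mul_assoc, mul_assoc]
    _ = M⁻¹ * A := by rw [Matrix.mul_nonsing_inv _ h, mul_one]

lemma hkey (A : Matrix (Fin r) (Fin r) ℝ) (k : ℤ)
    (h : IsUnit (Mm r A k).det) :
    (2 * (k : ℝ)) • (Mm r A k)⁻¹ + A * (Mm r A k)⁻¹ * A = 1 := by
  have h1 : A * (Mm r A k)⁻¹ * A = (Mm r A k)⁻¹ * (A * A) := by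
    rw [hcomm A k h, mul_assoc]
  have h2 : (2 * (k : ℝ)) • (Mm r A k)⁻¹ = (Mm r A k)⁻¹ * ((2 * (k : ℝ)) • 1) := by
    rw [mul_smul_comm, mul_one]
  rw [h1, h2, ← mul_add]
  exact Matrix.nonsing_inv_mul _ h

lemma hFF (A : Matrix (Fin r) (Fin r) ℝ)
    (B : ℤ → Matrix (Fin r) (Fin r) ℝ)
    (hB : ∀ k : ℤ, 0 ≤ k → B k * (B k)ᵀ = (2 * (k : ℝ)) • 1 + A * A)
    (k : ℤ) (hk : 0 ≤ k) :
    Fm r B k * (Fm r B k)ᵀ = Matrix.fromBlocks (Mm r A k) 0 0 (Mm r A (k+1)) := by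
  have h1 := hB k hk
  have h2 := hB (k+1) (by omega)
  unfold Fm Mm
  rw [Matrix.fromBlocks_transpose, Matrix.fromBlocks_multiply]
  simp [h1, h2]

lemma hG (A : Matrix (Fin r) (Fin r) ℝ) (k : ℤ)
    (h1 : IsUnit (Mm r A k).det) (h2 : IsUnit (Mm r A (k+1)).det) :
    (Matrix.fromBlocks (Mm r A k) 0 0 (Mm r A (k+1)))⁻¹
      = Matrix.fromBlocks (Mm r A k)⁻¹ 0 0 (Mm r A (k+1))⁻¹ := by
  apply Matrix.inv_eq_right_inv
  rw [Matrix.fromBlocks_multiply]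
  simp [Matrix.mul_nonsing_inv _ h1, Matrix.mul_nonsing_inv _ h2, ← Matrix.fromBlocks_one]

variable {A X Y : Matrix (Fin r) (Fin r) ℝ} {c c' : ℝ}

lemma L1 : (Matrix.fromBlocks Z 0 0 (-(c•1)))ᵀ
    * Matrix.fromBlocks X 0 0 Y * Matrix.fromBlocks Z (-A) (-A) 0
    = Matrix.fromBlocks 0 0 (c • (Y*A)) 0 := by
  simp [Matrix.fromBlocks_transpose, Matrix.fromBlocks_multiply, smul_mul_assoc, mul_assoc]

lemma L2 : (Matrix.fromBlocks Z 0 0 (-(c•1)))ᵀ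
    * Matrix.fromBlocks X 0 0 Y * Matrix.fromBlocks Z 0 0 (-(c'•1))
    = Matrix.fromBlocks 0 0 0 ((c*c') • Y) := by
  simp [Matrix.fromBlocks_transpose, Matrix.fromBlocks_multiply, smul_mul_assoc,
    mul_smul_comm, smul_smul, mul_comm c' c]

lemma L3 (hA : Aᵀ = A) : (Matrix.fromBlocks Z (-A) (-A) 0)ᵀ
    * Matrix.fromBlocks X 0 0 Y * Matrix.fromBlocks (c•1) 0 0 Z
    = Matrix.fromBlocks 0 0 (-(c • (A*X))) 0 := by
  simp [Matrix.fromBlocks_transpose, Matrix.fromBlocks_multiply, hA, mul_smul_comm,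
    smul_mul_assoc, mul_assoc]

lemma L4 (hA : Aᵀ = A) : (Matrix.fromBlocks Z (-A) (-A) 0)ᵀ
    * Matrix.fromBlocks X 0 0 Y * Matrix.fromBlocks Z (-A) (-A) 0
    = Matrix.fromBlocks (A*Y*A) 0 0 (A*X*A) := by
  simp [Matrix.fromBlocks_transpose, Matrix.fromBlocks_multiply, hA, mul_assoc]

lemma L5 (hA : Aᵀ = A) : (Matrix.fromBlocks Z (-A) (-A) 0)ᵀ
    * Matrix.fromBlocks X 0 0 Y * Matrix.fromBlocks Z 0 0 (-(c•1))
    = Matrix.fromBlocks 0 (c • (A*Y)) 0 0 := by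
  simp [Matrix.fromBlocks_transpose, Matrix.fromBlocks_multiply, hA, mul_smul_comm,
    smul_mul_assoc, mul_assoc]

lemma L6 : (Matrix.fromBlocks (c•1) 0 0 Z)ᵀ
    * Matrix.fromBlocks X 0 0 Y * Matrix.fromBlocks (c'•1) 0 0 Z
    = Matrix.fromBlocks ((c*c') • X) 0 0 0 := by
  simp [Matrix.fromBlocks_transpose, Matrix.fromBlocks_multiply, smul_mul_assoc,
    mul_smul_comm, smul_smul, mul_comm c' c]

lemma L7 : (Matrix.fromBlocks (c•1) 0 0 Z)ᵀ
    * Matrix.fromBlocks X 0 0 Y * Matrix.fromBlocks Z (-A) (-A) 0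
    = Matrix.fromBlocks 0 (-(c • (X*A))) 0 0 := by
  simp [Matrix.fromBlocks_transpose, Matrix.fromBlocks_multiply, smul_mul_assoc, mul_assoc]

lemma L8 : (Matrix.fromBlocks (c•1) 0 0 Z)ᵀ
    * Matrix.fromBlocks X 0 0 Y * Matrix.fromBlocks Z 0 0 (-(c'•1)) = 0 := by
  simp [Matrix.fromBlocks_transpose, Matrix.fromBlocks_multiply]

lemma L9 : (Matrix.fromBlocks Z 0 0 (-(c•1)))ᵀ
    * Matrix.fromBlocks X 0 0 Y * Matrix.fromBlocks (c'•1) 0 0 Z = 0 := by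
  simp [Matrix.fromBlocks_transpose, Matrix.fromBlocks_multiply]

lemma Pc_neg_one (t : ℤ) : Pc r A (-1) t
    = Matrix.fromBlocks (Real.sqrt (2 * (t : ℝ)) • 1) 0 0 Z := by simp [Pc]

lemma Pc_zero (t : ℤ) : Pc r A 0 t = Matrix.fromBlocks Z (-A) (-A) 0 := by simp [Pc]

lemma Pc_one (t : ℤ) : Pc r A 1 t
    = Matrix.fromBlocks Z 0 0 (-(Real.sqrt (2 * (t : ℝ) + 2) • 1)) := by simp [Pc]

lemma Pc_one_neg : Pc r A 1 (-1) = 0 := by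
  rw [Pc_one]
  norm_num

lemma Pc_other (n t : ℤ) (h1 : n ≠ -1) (h2 : n ≠ 0) (h3 : n ≠ 1) :
    Pc r A n t = 0 := by simp [Pc, h1, h2, h3]

end Aux

/-- for a symmetric `r×r` matrix `A` and Cholesky factors
`B_k B_kᵀ = 2k I + A²`, with `P(k,S) = [[√(2k) S⁻¹ I, −A],[−A, −√(2k+2) S I]]`
and `F(k) = [[0, B_k],[B_{k+1}, 0]]`, one has
`F(k) F(k)ᵀ = [[2k I + A², 0],[0, (2k+2) I + A²]]` and
`P(k,S)* (F(k)ᵀ)⁻¹ F(k)⁻¹ P(k,S) = I_{2r}` as shift operators, where the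
adjoint of `∑ A_n(k) S^n` is `∑ A_n(k−n)ᵀ S^{−n}`; the operator identity is
expressed coefficientwise: for each shift `d`, the `S^d`-coefficient of
`P* (F Fᵀ)⁻¹ P` at `k` equals `δ_{d,0} I`. -/
theorem stmt17 (r : ℕ) (A : Matrix (Fin r) (Fin r) ℝ) (hA : Aᵀ = A)
    (B : ℤ → Matrix (Fin r) (Fin r) ℝ)
    (hB : ∀ k : ℤ, 0 ≤ k → B k * (B k)ᵀ = (2 * (k : ℝ)) • 1 + A * A)
    (hBu : ∀ k : ℤ, 0 ≤ k → IsUnit (B k)) :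
    (∀ k : ℤ, 0 ≤ k →
      Fm r B k * (Fm r B k)ᵀ =
        Matrix.fromBlocks ((2 * (k : ℝ)) • 1 + A * A) 0 0
          ((2 * (k : ℝ) + 2) • 1 + A * A))
    ∧ ∀ d k : ℤ, 0 ≤ k →
        (∑ mm ∈ Finset.Icc (-1 : ℤ) 1,
          (Pc r A (-mm) (k + mm))ᵀ * (Fm r B (k + mm) * (Fm r B (k + mm))ᵀ)⁻¹
            * Pc r A (d - mm) (k + mm))
          = if d = 0 then 1 else 0 := by
  have hMdet : ∀ j : ℤ, 0 ≤ j → IsUnit (Mm r A j).det := by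
    intro j hj
    have h := hB j hj
    rw [show ((2 * (j:ℝ)) • 1 + A * A : Matrix (Fin r) (Fin r) ℝ) = Mm r A j from rfl] at h
    rw [← h, Matrix.det_mul, Matrix.det_transpose]
    exact ((Matrix.isUnit_iff_isUnit_det _).mp (hBu j hj)).mul
      ((Matrix.isUnit_iff_isUnit_det _).mp (hBu j hj))
  have hFF' : ∀ j : ℤ, 0 ≤ j → Fm r B j * (Fm r B j)ᵀ
      = Matrix.fromBlocks (Mm r A j) 0 0 (Mm r A (j+1)) := hFF A B hB
  have hG' : ∀ j : ℤ, 0 ≤ j → (Fm r B j * (Fm r B j)ᵀ)⁻¹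
      = Matrix.fromBlocks (Mm r A j)⁻¹ 0 0 (Mm r A (j+1))⁻¹ := by
    intro j hj; rw [hFF' j hj]; exact hG A j (hMdet j hj) (hMdet (j+1) (by omega))
  constructor
  · intro k hk
    rw [hFF' k hk, Mm_succ]; rfl
  · intro d k hk
    have hkR : (0:ℝ) ≤ (k:ℝ) := by exact_mod_cast hk
    have hs0 : Real.sqrt (2 * ((k + -1 : ℤ) : ℝ) + 2) = Real.sqrt (2 * (k:ℝ)) := by
      congr 1; push_cast; ring
    have hs1 : Real.sqrt (2 * ((k + 1 : ℤ) : ℝ)) = Real.sqrt (2 * (k:ℝ) + 2) := by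
      congr 1; push_cast; ring
    have hms : Real.sqrt (2*(k:ℝ)) * Real.sqrt (2*(k:ℝ)) = 2*(k:ℝ) :=
      Real.mul_self_sqrt (by linarith)
    have hms1 : Real.sqrt (2*(k:ℝ)+2) * Real.sqrt (2*(k:ℝ)+2) = 2*(k:ℝ)+2 :=
      Real.mul_self_sqrt (by linarith)
    rw [show Finset.Icc (-1:ℤ) 1 = {-1,0,1} from by decide,
        Finset.sum_insert (by decide), Finset.sum_insert (by decide), Finset.sum_singleton]
    simp only [neg_neg, neg_zero, sub_neg_eq_add, sub_zero, add_zero]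
    have hPc1m : Pc r A 1 (k + -1)
        = Matrix.fromBlocks (0 : Matrix (Fin r) (Fin r) ℝ) 0 0
            (-(Real.sqrt (2 * (k:ℝ)) • 1)) := by rw [Pc_one, hs0]
    have hPcm1p : Pc r A (-1) (k + 1)
        = Matrix.fromBlocks (Real.sqrt (2 * (k:ℝ) + 2) • 1) 0 0
            (0 : Matrix (Fin r) (Fin r) ℝ) := by rw [Pc_neg_one, hs1]
    by_cases hd0 : d = 0
    · subst hd0
      rw [if_pos rfl]
      have h1 : (Pc r A 1 (k + -1))ᵀ * (Fm r B (k + -1) * (Fm r B (k + -1))ᵀ)⁻¹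
          * Pc r A (0 + 1) (k + -1)
          = Matrix.fromBlocks 0 0 0 ((2*(k:ℝ)) • (Mm r A k)⁻¹) := by
        rcases hk.lt_or_eq with hkpos | hk0
        · rw [hG' (k + -1) (by omega), show k + -1 + 1 = k from by ring,
            show (0:ℤ) + 1 = 1 from by norm_num, hPc1m, L2, hms]
        · rw [← hk0, show (0:ℤ) + -1 = -1 from by norm_num, Pc_one_neg]
          simp
      have h2 : (Pc r A 0 k)ᵀ * (Fm r B k * (Fm r B k)ᵀ)⁻¹ * Pc r A 0 k
          = Matrix.fromBlocks (A * (Mm r A (k+1))⁻¹ * A) 0 0 (A * (Mm r A k)⁻¹ * A) := by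
        rw [hG' k hk, Pc_zero, L4 hA]
      have h3 : (Pc r A (-1) (k + 1))ᵀ * (Fm r B (k + 1) * (Fm r B (k + 1))ᵀ)⁻¹
          * Pc r A (0 - 1) (k + 1)
          = Matrix.fromBlocks ((2*(k:ℝ)+2) • (Mm r A (k+1))⁻¹) 0 0 0 := by
        rw [hG' (k + 1) (by omega), show (0:ℤ) - 1 = -1 from by norm_num,
          hPcm1p, L6, hms1]
      rw [h1, h2, h3]
      have e1 : A * (Mm r A (k+1))⁻¹ * A + (2*(k:ℝ)+2) • (Mm r A (k+1))⁻¹ = 1 := by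
        rw [add_comm]
        have := hkey A (k+1) (hMdet (k+1) (by omega))
        rwa [show (2 * ((k+1:ℤ):ℝ)) = 2*(k:ℝ)+2 from by push_cast; ring] at this
      have e2 : (2*(k:ℝ)) • (Mm r A k)⁻¹ + A * (Mm r A k)⁻¹ * A = 1 :=
        hkey A k (hMdet k hk)
      rw [Matrix.fromBlocks_add, Matrix.fromBlocks_add]
      simp only [add_zero, zero_add, e1, e2]
      exact Matrix.fromBlocks_one
    · rw [if_neg hd0]
      by_cases hdm1 : d = -1
      · subst hdm1
        have h1 : (Pc r A 1 (k + -1))ᵀ * (Fm r B (k + -1) * (Fm r B (k + -1))ᵀ)⁻¹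
            * Pc r A (-1 + 1) (k + -1)
            = Matrix.fromBlocks 0 0 (Real.sqrt (2*(k:ℝ)) • ((Mm r A k)⁻¹ * A)) 0 := by
          rcases hk.lt_or_eq with hkpos | hk0
          · rw [hG' (k + -1) (by omega), show k + -1 + 1 = k from by ring,
              show (-1:ℤ) + 1 = 0 from by norm_num, hPc1m, Pc_zero, L1]
          · rw [← hk0, show (0:ℤ) + -1 = -1 from by norm_num, Pc_one_neg]
            simp [Real.sqrt_eq_zero']
        have h2 : (Pc r A 0 k)ᵀ * (Fm r B k * (Fm r B k)ᵀ)⁻¹ * Pc r A (-1) k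
            = Matrix.fromBlocks 0 0 (-(Real.sqrt (2*(k:ℝ)) • (A * (Mm r A k)⁻¹))) 0 := by
          rw [hG' k hk, Pc_zero, Pc_neg_one, L3 hA]
        have h3 : (Pc r A (-1) (k + 1))ᵀ * (Fm r B (k + 1) * (Fm r B (k + 1))ᵀ)⁻¹
            * Pc r A (-1 - 1) (k + 1) = 0 := by
          rw [Pc_other (-1-1) (k+1) (by norm_num) (by norm_num) (by norm_num), mul_zero]
        rw [h1, h2, h3, add_zero, Matrix.fromBlocks_add, hcomm A k (hMdet k hk)]
        simp
      · by_cases hd1 : d = 1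
        · subst hd1
          have h1 : (Pc r A 1 (k + -1))ᵀ * (Fm r B (k + -1) * (Fm r B (k + -1))ᵀ)⁻¹
              * Pc r A (1 + 1) (k + -1) = 0 := by
            rw [Pc_other (1+1) (k + -1) (by norm_num) (by norm_num) (by norm_num), mul_zero]
          have h2 : (Pc r A 0 k)ᵀ * (Fm r B k * (Fm r B k)ᵀ)⁻¹ * Pc r A 1 k
              = Matrix.fromBlocks 0 (Real.sqrt (2*(k:ℝ)+2) • (A * (Mm r A (k+1))⁻¹)) 0 0 := by
            rw [hG' k hk, Pc_zero, Pc_one, L5 hA]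
          have h3 : (Pc r A (-1) (k + 1))ᵀ * (Fm r B (k + 1) * (Fm r B (k + 1))ᵀ)⁻¹
              * Pc r A (1 - 1) (k + 1)
              = Matrix.fromBlocks 0 (-(Real.sqrt (2*(k:ℝ)+2) • ((Mm r A (k+1))⁻¹ * A))) 0 0 := by
            rw [hG' (k + 1) (by omega), show (1:ℤ) - 1 = 0 from by norm_num,
              hPcm1p, Pc_zero, L7]
          rw [h1, h2, h3, zero_add, Matrix.fromBlocks_add,
            hcomm A (k+1) (hMdet (k+1) (by omega))]
          simp
        · by_cases hdm2 : d = -2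
          · subst hdm2
            have h1 : (Pc r A 1 (k + -1))ᵀ * (Fm r B (k + -1) * (Fm r B (k + -1))ᵀ)⁻¹
                * Pc r A (-2 + 1) (k + -1) = 0 := by
              rcases hk.lt_or_eq with hkpos | hk0
              · rw [hG' (k + -1) (by omega),
                  show (-2:ℤ) + 1 = -1 from by norm_num, hPc1m, Pc_neg_one, L9]
              · rw [← hk0, show (0:ℤ) + -1 = -1 from by norm_num, Pc_one_neg]
                simp
            have h2 : (Pc r A 0 k)ᵀ * (Fm r B k * (Fm r B k)ᵀ)⁻¹ * Pc r A (-2) k = 0 := by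
              rw [Pc_other (-2) k (by norm_num) (by norm_num) (by norm_num), mul_zero]
            have h3 : (Pc r A (-1) (k + 1))ᵀ * (Fm r B (k + 1) * (Fm r B (k + 1))ᵀ)⁻¹
                * Pc r A (-2 - 1) (k + 1) = 0 := by
              rw [Pc_other (-2-1) (k+1) (by norm_num) (by norm_num) (by norm_num), mul_zero]
            rw [h1, h2, h3]; simp
          · by_cases hd2 : d = 2
            · subst hd2
              have h1 : (Pc r A 1 (k + -1))ᵀ * (Fm r B (k + -1) * (Fm r B (k + -1))ᵀ)⁻¹
                  * Pc r A (2 + 1) (k + -1) = 0 := by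
                rw [Pc_other (2+1) (k + -1) (by norm_num) (by norm_num) (by norm_num), mul_zero]
              have h2 : (Pc r A 0 k)ᵀ * (Fm r B k * (Fm r B k)ᵀ)⁻¹ * Pc r A 2 k = 0 := by
                rw [Pc_other 2 k (by norm_num) (by norm_num) (by norm_num), mul_zero]
              have h3 : (Pc r A (-1) (k + 1))ᵀ * (Fm r B (k + 1) * (Fm r B (k + 1))ᵀ)⁻¹
                  * Pc r A (2 - 1) (k + 1) = 0 := by
                rw [hG' (k + 1) (by omega), show (2:ℤ) - 1 = 1 from by norm_num,
                  hPcm1p, Pc_one, L8]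
              rw [h1, h2, h3]; simp
            · have h1 : (Pc r A 1 (k + -1))ᵀ * (Fm r B (k + -1) * (Fm r B (k + -1))ᵀ)⁻¹
                  * Pc r A (d + 1) (k + -1) = 0 := by
                rw [Pc_other (d+1) (k + -1) (by omega) (by omega) (by omega), mul_zero]
              have h2 : (Pc r A 0 k)ᵀ * (Fm r B k * (Fm r B k)ᵀ)⁻¹ * Pc r A d k = 0 := by
                rw [Pc_other d k (by omega) (by omega) (by omega), mul_zero]
              have h3 : (Pc r A (-1) (k + 1))ᵀ * (Fm r B (k + 1) * (Fm r B (k + 1))ᵀ)⁻¹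
                  * Pc r A (d - 1) (k + 1) = 0 := by
                rw [Pc_other (d-1) (k+1) (by omega) (by omega) (by omega), mul_zero]
              rw [h1, h2, h3]; simp
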